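/- arXiv:2508.11441 — 2 statements merged into one kernel-verified Lean document; each statement's English description precedes it below -/
import Mathlib

section
/- Let X = ℝ^d with a probability distribution P having a positive density with respect to Lebesgue measure. Let F = T_∞ be the class of axis-parallel decision trees of arbitrary finite depth with values in [−1,1]. Fix f ∈ T_∞, x_0 ∈ ℝ^d, and an anchor explanation (R, p) with x_0 ∈ X_R, P(X_R) > 0 (positive coverage), and precision p = prec(R, f, x_0) = 1 (a perfect anchor). Then for every n ∈ ℕ the anchor explanation is informative: R_n(F_explain) < R_n(F_predict). -/
open MeasureTheory
open scoped ENNReal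

/-- The distribution of one sample: a point drawn from `μ` together with an independent
Rademacher sign (uniform on `{-1, +1}`), taken as an `n`-fold product. -/
noncomputable def sampleMeasure {α : Type*} [MeasurableSpace α] (μ : Measure α) (n : ℕ) :
    Measure (Fin n → α × ℝ) :=
  Measure.pi fun _ =>
    μ.prod ((2 : ℝ≥0∞)⁻¹ • Measure.dirac (-1 : ℝ) + (2 : ℝ≥0∞)⁻¹ • Measure.dirac (1 : ℝ))

/-- Rademacher complexity `R_n(F) = E_{x,σ} sup_{g ∈ F} (1/n) ∑ σ_i g(x_i)`. -/
noncomputable def rademacher {α : Type*} [MeasurableSpace α] (μ : Measure α) (n : ℕ)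
    (F : Set (α → ℝ)) : ℝ :=
  ∫ ω, sSup ((fun g => (n : ℝ)⁻¹ * ∑ i, (ω i).2 * g (ω i).1) '' F) ∂(sampleMeasure μ n)

/-- Axis-parallel decision trees of depth at most `K`, defined inductively: a tree of
depth `0` is a constant function; a tree of depth at most `K+1` is either a tree of depth
at most `K`, or a threshold split on some coordinate between two trees of depth at most `K`. -/
def IsTree {d : ℕ} : ℕ → ((Fin d → ℝ) → ℝ) → Prop
  | 0, g => ∃ c : ℝ, g = fun _ => c
  | K + 1, g => IsTree K g ∨
      ∃ (j : Fin d) (t : ℝ) (g₁ g₂ : (Fin d → ℝ) → ℝ), IsTree K g₁ ∧ IsTree K g₂ ∧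
        g = fun x => if x j ≤ t then g₁ x else g₂ x

/-- The precision of the box `XR` for the scoring function `g` at `x₀`:
the conditional probability under `μ` that a point of `XR` receives the same
classification label `sign (g x)` as `x₀`. -/
noncomputable def precision {d : ℕ} (μ : Measure (Fin d → ℝ)) (XR : Set (Fin d → ℝ))
    (g : (Fin d → ℝ) → ℝ) (x₀ : Fin d → ℝ) : ℝ :=
  (μ {x | x ∈ XR ∧ Real.sign (g x) = Real.sign (g x₀)}).toReal / (μ XR).toReal

/-!
A finite set of labelled points can be interpolated by a decision tree, and under a measure
without atoms the sample points are almost surely distinct and different from `x₀`; so on almost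
every sample some tree of `F_predict` has correlation `1` with the signs, and
`R_n(F_predict) = 1`.

On the other hand a tree is constant on a small cube having `x` as its top corner. By Lebesgue's
differentiation theorem such cubes have positive `μ`-mass at `μ`-almost every `x`, and this
exceptional set does not depend on the tree. Hence a perfect anchor forces every `g ∈ F_explain`
to have the sign of `f x₀` at almost every point of the interior of `X_R`, which carries all the
mass of `X_R` because the boundary of a convex set is Lebesgue-null. With positive probability the
first sample point falls there with the opposite Rademacher sign, costing `1/n` of correlation
for every `g ∈ F_explain`, so `R_n(F_explain) < 1`.
-/

open Metric Filter Set Function ProbabilityTheory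
open scoped Topology

namespace IsTree

variable {d : ℕ}

theorem mono {K K' : ℕ} {g : (Fin d → ℝ) → ℝ} (h : IsTree K g) (hK : K ≤ K') :
    IsTree K' g := by
  induction hK with
  | refl => exact h
  | step _ ih => exact Or.inl ih

theorem measurable {K : ℕ} {g : (Fin d → ℝ) → ℝ} (h : IsTree K g) : Measurable g := by
  induction K generalizing g with
  | zero => obtain ⟨c, rfl⟩ := h; exact measurable_const
  | succ K ih =>
    rcases h with h | ⟨j, t, g₁, g₂, h₁, h₂, rfl⟩
    · exact ih h
    · exact Measurable.ite (measurableSet_le (measurable_pi_apply j) measurable_const)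
        (ih h₁) (ih h₂)

theorem eventually_nhdsLE_eq {K : ℕ} {g : (Fin d → ℝ) → ℝ} (h : IsTree K g) (x : Fin d → ℝ) :
    ∀ᶠ y in 𝓝[≤] x, g y = g x := by
  induction K generalizing g with
  | zero => obtain ⟨c, rfl⟩ := h; exact Eventually.of_forall fun _ => rfl
  | succ K ih =>
    rcases h with h | ⟨j, t, g₁, g₂, h₁, h₂, rfl⟩
    · exact ih h
    by_cases hx : x j ≤ t
    · filter_upwards [self_mem_nhdsWithin, ih h₁] with y (hy : y ≤ x) hg
      simp only [hx, (hy j).trans hx, if_true, hg]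
    · have hgt : ∀ᶠ y in 𝓝[≤] x, t < y j :=
        nhdsWithin_le_nhds (((continuous_apply j).tendsto x).eventually (lt_mem_nhds (not_le.1 hx)))
      filter_upwards [hgt, ih h₂] with y hy hg
      simp only [hx, not_le.2 hy, if_false, hg]

end IsTree

theorem exists_isTree_eqOn {d : ℕ} (v : (Fin d → ℝ) → ℝ) (s : Finset (Fin d → ℝ))
    (hs : s.Nonempty) :
    ∃ K g, IsTree K g ∧ EqOn g v s ∧ range g ⊆ v '' s := by
  induction s using Finset.strongInduction with
  | H s ih =>
  by_cases hsub : (s : Set (Fin d → ℝ)).Subsingleton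
  · obtain ⟨a, ha⟩ := hs
    refine ⟨0, fun _ => v a, ⟨v a, rfl⟩, fun x hx => by rw [hsub hx ha], ?_⟩
    rintro _ ⟨x, rfl⟩
    exact mem_image_of_mem v ha
  -- split at a coordinate where two points of `s` differ, keeping one point on each side
  obtain ⟨a, ha, b, hb, j, hab⟩ : ∃ a ∈ s, ∃ b ∈ s, ∃ j, a j < b j := by
    obtain ⟨a, ha, b, hb, hne⟩ := Set.not_subsingleton_iff.1 hsub
    obtain ⟨j, hj⟩ := Function.ne_iff.1 hne
    rcases hj.lt_or_gt with h | h
    exacts [⟨a, ha, b, hb, j, h⟩, ⟨b, hb, a, ha, j, h⟩]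
  obtain ⟨K₁, g₁, hT₁, hv₁, hr₁⟩ := ih (s.filter fun x => x j ≤ a j)
    (Finset.filter_ssubset.2 ⟨b, hb, hab.not_ge⟩) ⟨a, Finset.mem_filter.2 ⟨ha, le_rfl⟩⟩
  obtain ⟨K₂, g₂, hT₂, hv₂, hr₂⟩ := ih (s.filter fun x => ¬ x j ≤ a j)
    (Finset.filter_ssubset.2 ⟨a, ha, not_not.2 le_rfl⟩) ⟨b, Finset.mem_filter.2 ⟨hb, hab.not_ge⟩⟩
  refine ⟨max K₁ K₂ + 1, fun x => if x j ≤ a j then g₁ x else g₂ x,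
    Or.inr ⟨j, a j, g₁, g₂, hT₁.mono (le_max_left _ _), hT₂.mono (le_max_right _ _), rfl⟩,
    fun x hx => ?_, ?_⟩
  · by_cases hxj : x j ≤ a j
    · simpa [hxj] using hv₁ (Finset.mem_filter.2 ⟨hx, hxj⟩)
    · simpa [hxj] using hv₂ (Finset.mem_filter.2 ⟨hx, hxj⟩)
  · rintro _ ⟨x, rfl⟩
    dsimp only
    split_ifs
    · obtain ⟨y, hy, hxy⟩ := hr₁ ⟨x, rfl⟩
      exact ⟨y, (Finset.mem_filter.1 hy).1, hxy⟩
    · obtain ⟨y, hy, hxy⟩ := hr₂ ⟨x, rfl⟩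
      exact ⟨y, (Finset.mem_filter.1 hy).1, hxy⟩

theorem ae_eventually_measure_closedBall_pos {α : Type*} [MetricSpace α] [MeasurableSpace α]
    [BorelSpace α] [SecondCountableTopology α] (ν μ : Measure α) [IsUnifLocDoublingMeasure ν]
    [IsLocallyFiniteMeasure ν] [IsLocallyFiniteMeasure μ] (hμν : μ ≪ ν) :
    ∀ᵐ x ∂μ, ∀ w : ℝ → α, (∀ᶠ δ in 𝓝[>] 0, x ∈ closedBall (w δ) δ) →
      ∀ᶠ δ in 𝓝[>] 0, 0 < μ (closedBall (w δ) δ) := by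
  filter_upwards [hμν.ae_le ((IsUnifLocDoublingMeasure.vitaliFamily ν 1).ae_tendsto_rnDeriv μ),
    Measure.rnDeriv_pos hμν] with x hx hpos w hw
  have hlim := hx.comp (IsUnifLocDoublingMeasure.tendsto_closedBall_filterAt ν w id tendsto_id
    (by simpa using hw))
  filter_upwards [hlim.eventually_const_lt hpos] with δ hδ
  exact pos_of_ne_zero fun h => by simp [h] at hδ

theorem closedBall_sub_const_subset_Iic {ι : Type*} [Fintype ι] (x : ι → ℝ) (δ : ℝ) :
    closedBall (x - const ι δ) δ ⊆ Iic x := by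
  intro y hy j
  have := (dist_le_pi_dist y (x - const ι δ) j).trans (mem_closedBall.1 hy)
  rw [Real.dist_eq, abs_le] at this
  simp only [Pi.sub_apply, const_apply] at this
  linarith [this.2]

theorem mem_closedBall_sub_const {ι : Type*} [Fintype ι] (x : ι → ℝ) {δ : ℝ} (hδ : 0 ≤ δ) :
    x ∈ closedBall (x - const ι δ) δ := by
  rw [mem_closedBall, dist_eq_norm, sub_sub_cancel]
  exact (pi_norm_const_le δ).trans (abs_of_nonneg hδ).le

theorem eventually_closedBall_sub_const_subset {ι : Type*} [Fintype ι] {x : ι → ℝ}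
    {s : Set (ι → ℝ)} (hs : s ∈ 𝓝[≤] x) :
    ∀ᶠ δ in 𝓝[>] 0, closedBall (x - const ι δ) δ ⊆ s := by
  obtain ⟨ε, hε, hεs⟩ := Metric.mem_nhdsWithin_iff.1 hs
  filter_upwards [Ioo_mem_nhdsGT (half_pos hε)] with δ hδ y hy
  refine hεs ⟨?_, closedBall_sub_const_subset_Iic x δ hy⟩
  calc dist y x ≤ dist y (x - const ι δ) + dist (x - const ι δ) x := dist_triangle _ _ _
    _ ≤ δ + δ := add_le_add (mem_closedBall.1 hy)
        (mem_closedBall'.1 (mem_closedBall_sub_const x hδ.1.le))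
    _ < ε := by linarith [hδ.2]

theorem ae_eventually_measure_closedBall_sub_const_pos {ι : Type*} [Fintype ι]
    (μ : Measure (ι → ℝ)) [IsLocallyFiniteMeasure μ] (hμ : μ ≪ volume) :
    ∀ᵐ x ∂μ, ∀ᶠ δ in 𝓝[>] 0, 0 < μ (closedBall (x - const ι δ) δ) := by
  filter_upwards [ae_eventually_measure_closedBall_pos volume μ hμ] with x hx
  exact hx _ (eventually_mem_nhdsWithin.mono fun δ hδ => mem_closedBall_sub_const x (le_of_lt hδ))

theorem ae_eq_of_eventually_nhdsLE_eq {ι β : Type*} [Fintype ι] (μ : Measure (ι → ℝ))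
    [IsLocallyFiniteMeasure μ] (hμ : μ ≪ volume) :
    ∀ᵐ x ∂μ, ∀ (g : (ι → ℝ) → β) (s : Set (ι → ℝ)) (c : β), s ∈ 𝓝 x →
      (∀ᶠ y in 𝓝[≤] x, g y = g x) → (∀ᵐ y ∂μ, y ∈ s → g y = c) → g x = c := by
  filter_upwards [ae_eventually_measure_closedBall_sub_const_pos μ hμ] with x hx g s c hs hg hgc
  by_contra hne
  have hbad : {y | y ∈ s ∧ g y ≠ c} ∈ 𝓝[≤] x := by
    filter_upwards [nhdsWithin_le_nhds hs, hg] with y hys hy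
    exact ⟨hys, hy ▸ hne⟩
  obtain ⟨δ, hpos, hsub⟩ := (hx.and (eventually_closedBall_sub_const_subset hbad)).exists
  refine hpos.ne' (measure_mono_null hsub ?_)
  simpa only [ae_iff, Classical.not_imp] using hgc

noncomputable def rademacherSign : Measure ℝ :=
  (2 : ℝ≥0∞)⁻¹ • Measure.dirac (-1 : ℝ) + (2 : ℝ≥0∞)⁻¹ • Measure.dirac (1 : ℝ)

instance : IsProbabilityMeasure rademacherSign :=
  ⟨by simp [rademacherSign, ENNReal.inv_two_add_inv_two]⟩

theorem ae_rademacherSign : ∀ᵐ σ ∂rademacherSign, σ = -1 ∨ σ = 1 := by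
  simp [rademacherSign, ae_iff, Set.indicator]

theorem rademacherSign_singleton_pos {τ : ℝ} (hτ : τ = -1 ∨ τ = 1) : 0 < rademacherSign {τ} := by
  rcases hτ with rfl | rfl <;> simp [rademacherSign]

noncomputable def correlation {α : Type*} (n : ℕ) (ω : Fin n → α × ℝ) (g : α → ℝ) : ℝ :=
  (n : ℝ)⁻¹ * ∑ i, (ω i).2 * g (ω i).1

theorem MeasureTheory.Measure.prod_diagonal_eq_zero {α : Type*} [MeasurableSpace α]
    [MeasurableEq α] (μ ν : Measure α) [SFinite μ] [SFinite ν] [NullSingletonClass ν] :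
    μ.prod ν (diagonal α) = 0 := by
  rw [Measure.prod_apply measurableSet_diagonal]
  simp [preimage, mem_diagonal_iff]

section Sample

variable {α : Type*} [MeasurableSpace α] (μ : Measure α) {n : ℕ}

theorem sampleMeasure_eq_pi : sampleMeasure μ n = Measure.pi fun _ => μ.prod rademacherSign := rfl

instance [IsProbabilityMeasure μ] : IsProbabilityMeasure (sampleMeasure μ n) := by
  rw [sampleMeasure_eq_pi]; infer_instance

theorem rademacher_eq_integral (F : Set (α → ℝ)) :
    rademacher μ n F = ∫ ω, sSup (correlation n ω '' F) ∂sampleMeasure μ n := rfl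

theorem ae_sampleMeasure [SigmaFinite μ] {p : α × ℝ → Prop}
    (hp : ∀ᵐ z ∂μ.prod rademacherSign, p z) :
    ∀ᵐ ω ∂sampleMeasure μ n, ∀ i, p (ω i) := by
  rw [sampleMeasure_eq_pi]
  exact ae_all_iff.2 fun _ => Measure.tendsto_eval_ae_ae.eventually hp

theorem ae_sampleMeasure_sign [SigmaFinite μ] :
    ∀ᵐ ω ∂sampleMeasure μ n, ∀ i, (ω i).2 = -1 ∨ (ω i).2 = 1 :=
  ae_sampleMeasure μ (Measure.quasiMeasurePreserving_snd.ae ae_rademacherSign)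

theorem ae_sampleMeasure_fst [SigmaFinite μ] {p : α → Prop} (hp : ∀ᵐ x ∂μ, p x) :
    ∀ᵐ ω ∂sampleMeasure μ n, ∀ i, p (ω i).1 :=
  ae_sampleMeasure μ (Measure.quasiMeasurePreserving_fst.ae hp)

theorem sampleMeasure_eval_preimage [IsProbabilityMeasure μ] (i : Fin n) (B : Set (α × ℝ)) :
    sampleMeasure μ n (eval i ⁻¹' B) = μ.prod rademacherSign B := by
  classical
  rw [← univ_pi_update_univ, sampleMeasure_eq_pi, Measure.pi_pi,
    ← Finset.prod_erase_mul _ _ (Finset.mem_univ i)]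
  rw [Finset.prod_eq_one fun j hj => by simp [Function.update_of_ne (Finset.ne_of_mem_erase hj)]]
  simp

theorem ae_sampleMeasure_injective [IsProbabilityMeasure μ] [MeasurableEq α]
    [NullSingletonClass μ] : ∀ᵐ ω ∂sampleMeasure μ n, Injective fun i => (ω i).1 := by
  rw [sampleMeasure_eq_pi]
  set ν := Measure.pi fun _ : Fin n => μ.prod rademacherSign
  have hX : ∀ k : Fin n, AEMeasurable (fun ω : Fin n → α × ℝ => (ω k).1) ν := fun k =>
    (measurable_fst.comp (measurable_pi_apply k)).aemeasurable
  have hlaw : ∀ k : Fin n, ν.map (fun ω => (ω k).1) = μ := fun k =>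
    (measurePreserving_fst.comp (measurePreserving_eval _ k)).map_eq
  simp only [Injective, ae_all_iff]
  intro i j
  rcases eq_or_ne i j with rfl | hij
  · exact Eventually.of_forall fun _ _ => rfl
  have hind : IndepFun (fun ω => (ω i).1) (fun ω => (ω j).1) ν :=
    (iIndepFun_pi (X := fun _ (z : α × ℝ) => z.1) fun _ => measurable_fst.aemeasurable).indepFun
      hij
  have hdiag : {ω : Fin n → α × ℝ | ¬((ω i).1 = (ω j).1 → i = j)} =
      (fun ω => ((ω i).1, (ω j).1)) ⁻¹' diagonal α := by
    ext ω; simp [hij]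
  rw [ae_iff, hdiag, ← Measure.map_apply (by fun_prop) measurableSet_diagonal,
    (indepFun_iff_map_prod_eq_prod_map_map (hX i) (hX j)).1 hind, hlaw, hlaw]
  exact Measure.prod_diagonal_eq_zero μ μ

end Sample

section Correlation

variable {α : Type*} {n : ℕ} {ω : Fin n → α × ℝ} {g : α → ℝ}

theorem sign_mul_le_one {σ t : ℝ} (hσ : σ = -1 ∨ σ = 1) (ht : t ∈ Icc (-1 : ℝ) 1) :
    σ * t ≤ 1 := by
  rcases hσ with rfl | rfl <;> linarith [ht.1, ht.2]

theorem correlation_le_one (hσ : ∀ i, (ω i).2 = -1 ∨ (ω i).2 = 1)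
    (hg : ∀ x, g x ∈ Icc (-1 : ℝ) 1) : correlation n ω g ≤ 1 := by
  have hsum : ∑ i, (ω i).2 * g (ω i).1 ≤ n := by
    simpa using Finset.sum_le_sum (s := Finset.univ) fun i _ => sign_mul_le_one (hσ i) (hg (ω i).1)
  rcases n.eq_zero_or_pos with rfl | hn
  · simp [correlation]
  · exact (inv_mul_le_one₀ (by positivity)).2 hsum

theorem correlation_le_one_sub (hσ : ∀ i, (ω i).2 = -1 ∨ (ω i).2 = 1)
    (hg : ∀ x, g x ∈ Icc (-1 : ℝ) 1) (i₀ : Fin n) (hi₀ : (ω i₀).2 * g (ω i₀).1 ≤ 0) :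
    correlation n ω g ≤ 1 - (n : ℝ)⁻¹ := by
  have hsum : ∑ i, (ω i).2 * g (ω i).1 ≤ n - 1 := by
    rw [← Finset.add_sum_erase _ _ (Finset.mem_univ i₀)]
    have hrest := Finset.sum_le_sum fun i (_ : i ∈ Finset.univ.erase i₀) =>
      sign_mul_le_one (hσ i) (hg (ω i).1)
    simp only [Finset.sum_const, Finset.card_erase_of_mem (Finset.mem_univ i₀),
      Finset.card_univ, Fintype.card_fin, nsmul_eq_mul, mul_one] at hrest
    rw [Nat.cast_sub (Fin.pos i₀), Nat.cast_one] at hrest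
    linarith
  have hn : (0 : ℝ) < n := by exact_mod_cast Fin.pos i₀
  calc correlation n ω g ≤ (n : ℝ)⁻¹ * (n - 1) := by
        unfold correlation; gcongr
    _ = 1 - (n : ℝ)⁻¹ := by field_simp

theorem correlation_eq_one (hσ : ∀ i, (ω i).2 = -1 ∨ (ω i).2 = 1) (hn : 0 < n)
    (hg : ∀ i, g (ω i).1 = (ω i).2) : correlation n ω g = 1 := by
  have hsq : ∀ i, (ω i).2 * g (ω i).1 = 1 := fun i => by
    rw [hg i]; rcases hσ i with h | h <;> rw [h] <;> norm_num
  simp only [correlation, hsq, Finset.sum_const, Finset.card_univ, Fintype.card_fin,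
    nsmul_eq_mul, mul_one]
  exact inv_mul_cancel₀ (by positivity)

end Correlation

section Rademacher

variable {α : Type*} [MeasurableSpace α] (μ : Measure α) [IsProbabilityMeasure μ] {n : ℕ}
  {F : Set (α → ℝ)}

theorem rademacher_eq_one (hn : 0 < n) (hF : ∀ g ∈ F, ∀ x, g x ∈ Icc (-1 : ℝ) 1)
    (hinterp : ∀ᵐ ω ∂sampleMeasure μ n, ∃ g ∈ F, ∀ i, g (ω i).1 = (ω i).2) :
    rademacher μ n F = 1 := by
  have hsup : ∀ᵐ ω ∂sampleMeasure μ n, sSup (correlation n ω '' F) = 1 := by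
    filter_upwards [hinterp, ae_sampleMeasure_sign μ] with ω ⟨g, hgF, hg⟩ hσ
    refine IsGreatest.csSup_eq ⟨⟨g, hgF, correlation_eq_one hσ hn hg⟩, ?_⟩
    rintro _ ⟨h, hhF, rfl⟩
    exact correlation_le_one hσ (hF h hhF)
  rw [rademacher_eq_integral, integral_congr_ae hsup]
  simp

theorem rademacher_lt_one (hn : 0 < n) (hF : ∀ g ∈ F, ∀ x, g x ∈ Icc (-1 : ℝ) 1)
    {A : Set α} (hA : 0 < μ A) {τ : ℝ} (hτ : τ = -1 ∨ τ = 1)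
    (hFA : ∀ g ∈ F, ∀ x ∈ A, τ * g x ≤ 0) : rademacher μ n F < 1 := by
  set Φ := fun ω => sSup (correlation n ω '' F)
  let i₀ : Fin n := ⟨0, hn⟩
  have hn' : (0 : ℝ) < (n : ℝ)⁻¹ := by positivity
  have hle : ∀ᵐ ω ∂sampleMeasure μ n, Φ ω ≤ 1 := by
    filter_upwards [ae_sampleMeasure_sign μ] with ω hσ
    refine Real.sSup_le ?_ zero_le_one
    rintro _ ⟨g, hg, rfl⟩
    exact correlation_le_one hσ (hF g hg)
  have hlt : ∀ᵐ ω ∂sampleMeasure μ n, ω i₀ ∈ A ×ˢ {τ} → Φ ω < 1 := by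
    filter_upwards [ae_sampleMeasure_sign μ] with ω hσ ⟨hA, hτ⟩
    refine (Real.sSup_le ?_ ?_).trans_lt (sub_lt_self 1 hn')
    · rintro _ ⟨g, hg, rfl⟩
      refine correlation_le_one_sub hσ (hF g hg) i₀ ?_
      rw [mem_singleton_iff.1 hτ]
      exact hFA g hg _ hA
    · exact sub_nonneg.2 (inv_le_one_of_one_le₀ (by exact_mod_cast hn))
  rw [rademacher_eq_integral]
  by_cases hint : Integrable Φ (sampleMeasure μ n)
  · have hpos : 0 < ∫ ω, (1 - Φ ω) ∂sampleMeasure μ n := by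
      refine (integral_pos_iff_support_of_nonneg_ae ?_ ((integrable_const 1).sub hint)).2 ?_
      · filter_upwards [hle] with ω h using sub_nonneg.2 h
      · calc 0 < μ.prod rademacherSign (A ×ˢ {τ}) := by
              rw [Measure.prod_prod]
              exact ENNReal.mul_pos hA.ne' (rademacherSign_singleton_pos hτ).ne'
          _ = sampleMeasure μ n (eval i₀ ⁻¹' (A ×ˢ {τ})) :=
              (sampleMeasure_eval_preimage μ _ _).symm
          _ ≤ _ := measure_mono_ae (hlt.mono fun ω h hω => (sub_pos.2 (h hω)).ne')
    rw [integral_sub (integrable_const 1) hint, integral_const] at hpos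
    simpa using hpos
  · rw [integral_undef hint]
    exact one_pos

end Rademacher

theorem measurable_sign : Measurable Real.sign := by
  unfold Real.sign
  exact Measurable.ite (measurableSet_lt measurable_id measurable_const) measurable_const
    (Measurable.ite (measurableSet_lt measurable_const measurable_id) measurable_const
      measurable_const)

theorem ae_sign_eq_of_precision_eq_one {d : ℕ} (μ : Measure (Fin d → ℝ)) [IsFiniteMeasure μ]
    {XR : Set (Fin d → ℝ)} (hXR : NullMeasurableSet XR μ) (hcov : μ XR ≠ 0)
    {g : (Fin d → ℝ) → ℝ} (hg : Measurable g) {x₀ : Fin d → ℝ}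
    (h : precision μ XR g x₀ = 1) :
    ∀ᵐ y ∂μ, y ∈ XR → Real.sign (g y) = Real.sign (g x₀) := by
  set S := {x | x ∈ XR ∧ Real.sign (g x) = Real.sign (g x₀)}
  have hS : μ S = μ XR := by
    rw [precision, div_eq_one_iff_eq (ENNReal.toReal_ne_zero.2 ⟨hcov, measure_ne_top μ _⟩),
      ENNReal.toReal_eq_toReal_iff' (measure_ne_top μ _) (measure_ne_top μ _)] at h
    exact h
  have hSm : NullMeasurableSet S μ :=
    hXR.inter ((measurable_sign.comp hg) (measurableSet_singleton _)).nullMeasurableSet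
  rw [ae_iff]
  refine measure_mono_null (t := XR \ S) (fun y hy => ?_) ?_
  · obtain ⟨hyXR, hne⟩ := Classical.not_imp.1 hy
    exact ⟨hyXR, fun hyS => hne hyS.2⟩
  rw [measure_sdiff (fun _ h => h.1) hSm (measure_ne_top μ _), hS, tsub_self]

theorem exists_sign_mul_nonpos (c : ℝ) :
    ∃ τ : ℝ, (τ = -1 ∨ τ = 1) ∧ ∀ y, Real.sign y = Real.sign c → τ * y ≤ 0 := by
  rcases lt_trichotomy c 0 with hc | rfl | hc
  · refine ⟨1, Or.inr rfl, fun y hy => ?_⟩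
    have := Real.sign_mul_nonneg y
    rw [hy, Real.sign_of_neg hc] at this
    linarith
  · refine ⟨1, Or.inr rfl, fun y hy => ?_⟩
    rw [Real.sign_zero, Real.sign_eq_zero_iff] at hy
    simp [hy]
  · refine ⟨-1, Or.inl rfl, fun y hy => ?_⟩
    have := Real.sign_mul_nonneg y
    rw [hy, Real.sign_of_pos hc] at this
    linarith

/-- The class `T_∞` of decision trees of finite depth with values in `[-1, 1]`. -/
def boundedTrees (d : ℕ) : Set ((Fin d → ℝ) → ℝ) :=
  {g | (∃ K, IsTree K g) ∧ ∀ x, g x ∈ Icc (-1 : ℝ) 1}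

theorem rademacher_boundedTrees_eq_one {d n : ℕ} (μ : Measure (Fin d → ℝ))
    [IsProbabilityMeasure μ] [NullSingletonClass μ] (hn : 0 < n) (x₀ : Fin d → ℝ) {c : ℝ}
    (hc : c ∈ Icc (-1 : ℝ) 1) : rademacher μ n {g ∈ boundedTrees d | g x₀ = c} = 1 := by
  refine rademacher_eq_one μ hn (fun g hg => hg.1.2) ?_
  filter_upwards [ae_sampleMeasure_sign μ, ae_sampleMeasure_injective μ,
    ae_sampleMeasure_fst μ (compl_mem_ae_iff.2 (measure_singleton x₀))] with ω hσ hinj hx₀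
  set v := extend (fun i => (ω i).1) (fun i => (ω i).2) fun _ => c with hv_def
  have hv : ∀ x, v x ∈ Icc (-1 : ℝ) 1 := fun x => by
    by_cases hx : ∃ i, (ω i).1 = x
    · obtain ⟨i, rfl⟩ := hx
      rw [hv_def, hinj.extend_apply]
      rcases hσ i with h | h <;> rw [h] <;> norm_num
    · rwa [hv_def, extend_apply' _ _ _ hx]
  obtain ⟨K, g, hT, hgv, hrange⟩ := exists_isTree_eqOn v
    (insert x₀ (Finset.univ.image fun i => (ω i).1)) (Finset.insert_nonempty _ _)
  refine ⟨g, ⟨⟨⟨K, hT⟩, fun x => ?_⟩, ?_⟩, fun i => ?_⟩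
  · obtain ⟨y, -, hy⟩ := hrange ⟨x, rfl⟩
    exact hy ▸ hv y
  · rw [hgv (Finset.mem_insert_self _ _)]
    exact extend_apply' _ _ _ fun ⟨i, hi⟩ => hx₀ i hi
  · rw [hgv (by simp), hv_def, hinj.extend_apply]

theorem rademacher_boundedTrees_perfectAnchor_lt_one {d n : ℕ} (μ : Measure (Fin d → ℝ))
    [IsProbabilityMeasure μ] (hμ : μ ≪ volume) (hn : 0 < n) {XR : Set (Fin d → ℝ)}
    (hXR : Convex ℝ XR) (hcov : 0 < μ XR) (x₀ : Fin d → ℝ) (c : ℝ) :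
    rademacher μ n {g ∈ boundedTrees d | g x₀ = c ∧ precision μ XR g x₀ = 1} < 1 := by
  obtain ⟨τ, hτ, hτc⟩ := exists_sign_mul_nonpos c
  have hinterior : μ XR ≤ μ (interior XR) := measure_mono_ae <| ae_le_set.2 <|
    measure_mono_null (sdiff_subset_sdiff_left subset_closure) (hμ (hXR.addHaar_frontier volume))
  have htypical := ae_eq_of_eventually_nhdsLE_eq (β := ℝ) μ hμ
  refine rademacher_lt_one μ hn (fun g hg => hg.1.2)
    (hcov.trans_le (hinterior.trans_eq (measure_inter_conull (mem_ae_iff.1 htypical)).symm)) hτ ?_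
  rintro g ⟨⟨⟨K, hT⟩, -⟩, rfl, hprec⟩ x ⟨hxXR, hx⟩
  refine hτc _ (hx (fun y => Real.sign (g y)) XR _ (mem_interior_iff_mem_nhds.1 hxXR)
    ((hT.eventually_nhdsLE_eq x).mono fun y hy => by rw [hy]) ?_)
  exact ae_sign_eq_of_precision_eq_one μ ((hXR.nullMeasurableSet (μ := volume)).mono_ac hμ) hcov.ne'
    hT.measurable hprec

theorem perfect_anchors_informative_on_unbounded_trees_general
    {d : ℕ} (hd : 0 < d)
    (μ : Measure (Fin d → ℝ)) [IsProbabilityMeasure μ]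
    (ρ : (Fin d → ℝ) → ℝ≥0∞) (hdens : μ = volume.withDensity ρ)
    (F : Set ((Fin d → ℝ) → ℝ))
    (hF : F = {g | (∃ K, IsTree K g) ∧ ∀ x, g x ∈ Set.Icc (-1 : ℝ) 1})
    (f : (Fin d → ℝ) → ℝ) (hf : f ∈ F) (x₀ : Fin d → ℝ)
    (I : Fin d → Set ℝ) (hI : ∀ j, (I j).OrdConnected)
    (XR : Set (Fin d → ℝ)) (hXR : XR = {x | ∀ j, x j ∈ I j})
    (hcov : 0 < μ XR)
    (n : ℕ) (hn : 1 ≤ n) :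
    rademacher μ n {g ∈ F | g x₀ = f x₀ ∧ precision μ XR g x₀ = 1} <
      rademacher μ n {g ∈ F | g x₀ = f x₀} := by
  have hF' : F = boundedTrees d := hF
  subst hdens hF' hXR
  -- for `d > 0` Lebesgue measure, hence `μ`, has no atoms
  have : Nonempty (Fin d) := ⟨⟨0, hd⟩⟩
  have hconv : Convex ℝ {x : Fin d → ℝ | ∀ j, x j ∈ I j} := by
    simpa [Set.pi] using convex_pi (s := univ) fun j _ => (hI j).convex
  rw [rademacher_boundedTrees_eq_one _ hn x₀ (hf.2 x₀)]
  exact rademacher_boundedTrees_perfectAnchor_lt_one _ (withDensity_absolutelyContinuous _ _) hn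
    hconv hcov x₀ (f x₀)

/-- **Perfect anchors (precision 1, positive coverage) on decision trees of arbitrary
depth are informative** for every `n ≥ 1`. -/
theorem perfect_anchors_informative_on_unbounded_trees
    {d : ℕ} (hd : 0 < d)
    (μ : Measure (Fin d → ℝ)) [IsProbabilityMeasure μ]
    (ρ : (Fin d → ℝ) → ℝ≥0∞) (hdens : μ = volume.withDensity ρ) (hpos : ∀ x, 0 < ρ x)
    (F : Set ((Fin d → ℝ) → ℝ))
    (hF : F = {g | (∃ K, IsTree K g) ∧ ∀ x, g x ∈ Set.Icc (-1 : ℝ) 1})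
    (f : (Fin d → ℝ) → ℝ) (hf : f ∈ F) (x₀ : Fin d → ℝ)
    (I : Fin d → Set ℝ) (hI : ∀ j, (I j).OrdConnected)
    (XR : Set (Fin d → ℝ)) (hXR : XR = {x | ∀ j, x j ∈ I j})
    (hx₀ : x₀ ∈ XR) (hcov : 0 < μ XR)
    (hprec : precision μ XR f x₀ = 1)
    (n : ℕ) (hn : 1 ≤ n) :
    rademacher μ n {g ∈ F | g x₀ = f x₀ ∧ precision μ XR g x₀ = 1} <
      rademacher μ n {g ∈ F | g x₀ = f x₀} :=
  perfect_anchors_informative_on_unbounded_trees_general hd μ ρ hdens F hF f hf x₀ I hI XR hXR hcov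
    n hn
end

section
/- Let X = ℝ^d with a probability distribution P having a density with respect to Lebesgue measure. Let F be either the class T_∞ of axis-parallel decision trees of arbitrary finite depth with values in [−1,1], or the class C of continuous functions ℝ^d → [−1,1], or the class D of differentiable functions ℝ^d → [−1,1]. Fix f ∈ F, x_0 ∈ ℝ^d, and a weak counterfactual explanation x_C ∈ X with c_f(x_C) ≠ c_f(x_0). Then for every n ∈ ℕ the weak counterfactual explanation is non-informative: R_n(F_explain) = R_n(F_predict). -/
/-!
Almost surely no sample point equals the counterfactual `x_C`, since `P` has a density and
`d > 0`. Each of the three classes can change the value of a function at a single point to any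
value in `[−1, 1]` while keeping it on any finite set avoiding that point: a smooth bump
around `x_C` for `C` and `D`, a small box around `x_C` cut out by a few axis-parallel splits
for `T_∞`. Flipping the sign at `x_C` while fixing the value at `x_0` and at the samples turns
every `g ∈ F_predict` into a member of `F_explain` with the same empirical correlation, so both
suprema coincide for almost every sample.
-/

open MeasureTheory
open scoped ENNReal

open Set
open scoped ContDiff

section Rademacher

variable {α : Type*} [MeasurableSpace α]

lemma measurePreserving_sampleMeasure_eval_fst (μ : Measure α) [IsProbabilityMeasure μ]
    (n : ℕ) (i : Fin n) :
    MeasurePreserving (fun (S : Fin n → α × ℝ) => (S i).1) (sampleMeasure μ n) μ := by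
  have : IsProbabilityMeasure
      ((2 : ℝ≥0∞)⁻¹ • Measure.dirac (-1 : ℝ) + (2 : ℝ≥0∞)⁻¹ • Measure.dirac (1 : ℝ)) :=
    ⟨by simp [ENNReal.inv_two_add_inv_two]⟩
  exact measurePreserving_fst.comp (measurePreserving_eval (fun _ : Fin n => μ.prod _) i)

lemma ae_sampleMeasure_forall {μ : Measure α} [IsProbabilityMeasure μ] {n : ℕ}
    {p : α → Prop} (hp : ∀ᵐ x ∂μ, p x) :
    ∀ᵐ S ∂sampleMeasure μ n, ∀ i, p (S i).1 :=
  ae_all_iff.2 fun i =>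
    (measurePreserving_sampleMeasure_eval_fst μ n i).quasiMeasurePreserving.ae hp

lemma rademacher_eq_of_subset_of_ae_exists_agree {μ : Measure α} {n : ℕ} {F G : Set (α → ℝ)}
    (hGF : G ⊆ F)
    (h : ∀ᵐ S ∂sampleMeasure μ n, ∀ g ∈ F, ∃ g' ∈ G, ∀ i, g' (S i).1 = g (S i).1) :
    rademacher μ n G = rademacher μ n F := by
  refine integral_congr_ae ?_
  filter_upwards [h] with S hS
  refine congrArg sSup (Subset.antisymm (image_mono hGF) ?_)
  rintro _ ⟨g, hg, rfl⟩
  obtain ⟨g', hg', hagree⟩ := hS g hg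
  exact ⟨g', hg', by simp only [hagree]⟩

end Rademacher

def PointwiseReassignable {α : Type*} (F : Set (α → ℝ)) : Prop :=
  ∀ g ∈ F, ∀ (s : Finset α) (x : α), x ∉ s → ∀ c ∈ Icc (-1 : ℝ) 1,
    ∃ g' ∈ F, g' x = c ∧ ∀ y ∈ s, g' y = g y

lemma exists_mem_Icc_sign_ne (a : ℝ) : ∃ c ∈ Icc (-1 : ℝ) 1, Real.sign c ≠ Real.sign a := by
  by_cases ha : 0 < a
  · refine ⟨-1, by norm_num, ?_⟩
    rw [Real.sign_of_pos ha, Real.sign_of_neg (by norm_num)]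
    norm_num
  · refine ⟨1, by norm_num, ?_⟩
    rw [Real.sign_one, Real.sign, if_neg ha]
    split_ifs <;> norm_num

lemma PointwiseReassignable.exists_sign_ne {α ι : Type*} [Fintype ι] {F : Set (α → ℝ)}
    (hF : PointwiseReassignable F) {g : α → ℝ} (hg : g ∈ F) {x₀ xC : α} (hne : x₀ ≠ xC)
    (pts : ι → α) (hpts : ∀ i, pts i ≠ xC) :
    ∃ g' ∈ F, g' x₀ = g x₀ ∧ Real.sign (g' xC) ≠ Real.sign (g' x₀) ∧
      ∀ i, g' (pts i) = g (pts i) := by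
  classical
  obtain ⟨c, hc, hsign⟩ := exists_mem_Icc_sign_ne (g x₀)
  obtain ⟨g', hg', hxC, hagree⟩ :=
    hF g hg (insert x₀ (Finset.univ.image pts)) xC (by simp [hne.symm, hpts]) c hc
  have h₀ : g' x₀ = g x₀ := hagree x₀ (Finset.mem_insert_self _ _)
  exact ⟨g', hg', h₀, by rwa [hxC, h₀], fun i => hagree _ (by simp)⟩

lemma Finset.exists_pos_le_dist_of_notMem {E : Type*} [MetricSpace E] {s : Finset E} {x : E}
    (hx : x ∉ s) : ∃ ε > 0, ∀ y ∈ s, ε ≤ dist y x := by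
  obtain ⟨ε, hε, hball⟩ :=
    Metric.mem_nhds_iff.1 (s.finite_toSet.isClosed.isOpen_compl.mem_nhds hx)
  exact ⟨ε, hε, fun y hy => not_lt.1 fun hlt => hball (Metric.mem_ball.2 hlt) hy⟩

section Smooth

variable {E : Type*} [NormedAddCommGroup E] [NormedSpace ℝ E] [HasContDiffBump E]

lemma exists_contDiff_mem_Icc_eq_one_eq_zero {s : Finset E} {x : E} (hx : x ∉ s) :
    ∃ φ : E → ℝ, ContDiff ℝ ∞ φ ∧ (∀ y, φ y ∈ Icc (0 : ℝ) 1) ∧ φ x = 1 ∧ ∀ y ∈ s, φ y = 0 := by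
  obtain ⟨ε, hε, hs⟩ := s.exists_pos_le_dist_of_notMem hx
  let φ : ContDiffBump x := ⟨ε / 2, ε, half_pos hε, half_lt_self hε⟩
  exact ⟨φ, φ.contDiff, fun y => ⟨φ.nonneg, φ.le_one⟩,
    φ.one_of_mem_closedBall (Metric.mem_closedBall_self (half_pos hε).le),
    fun y hy => φ.zero_of_le_dist (hs y hy)⟩

lemma pointwiseReassignable_of_smooth_blend (P : (E → ℝ) → Prop)
    (hP : ∀ g φ (c : ℝ), P g → ContDiff ℝ ∞ φ → P fun y => (1 - φ y) * g y + φ y * c) :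
    PointwiseReassignable {g | P g ∧ ∀ x, g x ∈ Icc (-1 : ℝ) 1} := by
  rintro g ⟨hg, hg_mem⟩ s x hx c hc
  obtain ⟨φ, hφ, hφ_mem, hφx, hφs⟩ := exists_contDiff_mem_Icc_eq_one_eq_zero hx
  refine ⟨fun y => (1 - φ y) * g y + φ y * c, ⟨hP g φ c hg hφ, fun y => ?_⟩, ?_, ?_⟩
  · simpa only [smul_eq_mul] using convex_Icc (-1 : ℝ) 1 (hg_mem y) hc
      (sub_nonneg.2 (hφ_mem y).2) (hφ_mem y).1 (sub_add_cancel 1 (φ y))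
  · simp [hφx]
  · intro y hy
    simp [hφs y hy]

lemma pointwiseReassignable_continuous :
    PointwiseReassignable {g : E → ℝ | Continuous g ∧ ∀ x, g x ∈ Icc (-1 : ℝ) 1} :=
  pointwiseReassignable_of_smooth_blend _ fun _ _ _ hg hφ => by
    have := hφ.continuous
    fun_prop

lemma pointwiseReassignable_differentiable :
    PointwiseReassignable {g : E → ℝ | Differentiable ℝ g ∧ ∀ x, g x ∈ Icc (-1 : ℝ) 1} :=
  pointwiseReassignable_of_smooth_blend _ fun _ _ _ hg hφ => by
    have := hφ.differentiable (by simp)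
    fun_prop

end Smooth

section Trees

variable {d : ℕ}

lemma IsTree.mono_s15 {K K' : ℕ} {g : (Fin d → ℝ) → ℝ} (hle : K ≤ K') (h : IsTree K g) :
    IsTree K' g := by
  induction hle with
  | refl => exact h
  | step _ ih => exact Or.inl ih

lemma exists_isTree_ite_le {g₁ g₂ : (Fin d → ℝ) → ℝ} (j : Fin d) (t : ℝ)
    (h₁ : ∃ K, IsTree K g₁) (h₂ : ∃ K, IsTree K g₂) :
    ∃ K, IsTree K fun x => if x j ≤ t then g₁ x else g₂ x := by
  obtain ⟨K₁, h₁⟩ := h₁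
  obtain ⟨K₂, h₂⟩ := h₂
  exact ⟨max K₁ K₂ + 1, Or.inr ⟨j, t, g₁, g₂, h₁.mono_s15 (le_max_left _ _),
    h₂.mono_s15 (le_max_right _ _), rfl⟩⟩

lemma exists_isTree_ite_forall_mem_Ioc (l : Finset (Fin d)) (a b : Fin d → ℝ) (c : ℝ)
    {g : (Fin d → ℝ) → ℝ} (hg : ∃ K, IsTree K g) :
    ∃ K, IsTree K fun x => if ∀ j ∈ l, x j ∈ Ioc (a j) (b j) then c else g x := by
  induction l using Finset.induction_on with
  | empty => exact ⟨0, c, by simp⟩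
  | insert j l _ ih =>
    have hsplit : (fun x => if ∀ k ∈ insert j l, x k ∈ Ioc (a k) (b k) then c else g x) =
        fun x => if x j ≤ a j then g x else
          if x j ≤ b j then (if ∀ k ∈ l, x k ∈ Ioc (a k) (b k) then c else g x) else g x := by
      funext x
      simp only [Finset.forall_mem_insert, mem_Ioc, not_le.symm]
      split_ifs <;> tauto
    rw [hsplit]
    exact exists_isTree_ite_le j _ hg (exists_isTree_ite_le j _ ih hg)

lemma pointwiseReassignable_isTree :
    PointwiseReassignable
      {g : (Fin d → ℝ) → ℝ | (∃ K, IsTree K g) ∧ ∀ x, g x ∈ Icc (-1 : ℝ) 1} := by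
  rintro g ⟨hg, hg_mem⟩ s x hx c hc
  obtain ⟨ε, hε, hs⟩ := s.exists_pos_le_dist_of_notMem hx
  -- `≤`-splits cut out boxes of `Ioc`s; the upper radius `ε / 2` keeps this one inside `ball x ε`.
  have hbox : ∀ y : Fin d → ℝ, (∀ j ∈ Finset.univ, y j ∈ Ioc (x j - ε) (x j + ε / 2)) →
      dist y x < ε := fun y hy => (dist_pi_lt_iff hε).2 fun j => by
    have := hy j (Finset.mem_univ j)
    rw [Real.dist_eq, abs_sub_lt_iff]
    constructor <;> linarith [this.1, this.2]
  refine ⟨_, ⟨exists_isTree_ite_forall_mem_Ioc Finset.univ (fun j => x j - ε)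
    (fun j => x j + ε / 2) c hg, fun y => ?_⟩, if_pos ?_, fun y hy => if_neg ?_⟩
  · split_ifs
    exacts [hc, hg_mem y]
  · intro j _
    constructor <;> linarith
  · exact fun hy' => (hs y hy).not_gt (hbox y hy')

end Trees

theorem weak_counterfactuals_noninformative_on_large_spaces_general
    {d : ℕ} (hd : 0 < d)
    (μ : Measure (Fin d → ℝ)) [IsProbabilityMeasure μ]
    (ρ : (Fin d → ℝ) → ℝ≥0∞) (hdens : μ = volume.withDensity ρ)
    (F : Set ((Fin d → ℝ) → ℝ))
    (hF : F = {g | (∃ K, IsTree K g) ∧ ∀ x, g x ∈ Set.Icc (-1 : ℝ) 1} ∨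
          F = {g | Continuous g ∧ ∀ x, g x ∈ Set.Icc (-1 : ℝ) 1} ∨
          F = {g | Differentiable ℝ g ∧ ∀ x, g x ∈ Set.Icc (-1 : ℝ) 1})
    (f : (Fin d → ℝ) → ℝ) (x₀ : Fin d → ℝ)
    (xC : Fin d → ℝ) (hxC : Real.sign (f xC) ≠ Real.sign (f x₀))
    (n : ℕ) :
    rademacher μ n {g ∈ F | g x₀ = f x₀ ∧ Real.sign (g xC) ≠ Real.sign (g x₀)} =
      rademacher μ n {g ∈ F | g x₀ = f x₀} := by
  have hne : x₀ ≠ xC := fun h => hxC (h ▸ rfl)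
  have hreassign : PointwiseReassignable F := by
    rcases hF with rfl | rfl | rfl
    exacts [pointwiseReassignable_isTree, pointwiseReassignable_continuous,
      pointwiseReassignable_differentiable]
  have : Nonempty (Fin d) := ⟨⟨0, hd⟩⟩
  have hμ : ∀ᵐ x ∂μ, x ≠ xC := hdens ▸ Measure.ae_ne _ xC
  refine rademacher_eq_of_subset_of_ae_exists_agree (fun g hg => ⟨hg.1, hg.2.1⟩) ?_
  filter_upwards [ae_sampleMeasure_forall (n := n) hμ] with S hS
  rintro g ⟨hgF, hg₀⟩
  obtain ⟨g', hg'F, hg'₀, hsign, hagree⟩ := hreassign.exists_sign_ne hgF hne (fun i => (S i).1) hS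
  exact ⟨g', ⟨hg'F, hg'₀.trans hg₀, hsign⟩, hagree⟩

/-- **Weak counterfactual explanations are not informative on large function spaces:**
on the class `T_∞` of decision trees of arbitrary finite depth, on the class `C` of
continuous functions, and on the class `D` of differentiable functions (all with values
in `[−1,1]`). The classifier of a scoring function `g` is `c_g(x) = sign (g x)`, and a
weak counterfactual of `f` at `x₀` is a point `x_C` with `c_f(x_C) ≠ c_f(x₀)`. -/
theorem weak_counterfactuals_noninformative_on_large_spaces
    {d : ℕ} (hd : 0 < d)
    (μ : Measure (Fin d → ℝ)) [IsProbabilityMeasure μ]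
    (ρ : (Fin d → ℝ) → ℝ≥0∞) (hdens : μ = volume.withDensity ρ)
    (F : Set ((Fin d → ℝ) → ℝ))
    (hF : F = {g | (∃ K, IsTree K g) ∧ ∀ x, g x ∈ Set.Icc (-1 : ℝ) 1} ∨
          F = {g | Continuous g ∧ ∀ x, g x ∈ Set.Icc (-1 : ℝ) 1} ∨
          F = {g | Differentiable ℝ g ∧ ∀ x, g x ∈ Set.Icc (-1 : ℝ) 1})
    (f : (Fin d → ℝ) → ℝ) (hf : f ∈ F) (x₀ : Fin d → ℝ)
    (xC : Fin d → ℝ) (hxC : Real.sign (f xC) ≠ Real.sign (f x₀))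
    (n : ℕ) :
    rademacher μ n {g ∈ F | g x₀ = f x₀ ∧ Real.sign (g xC) ≠ Real.sign (g x₀)} =
      rademacher μ n {g ∈ F | g x₀ = f x₀} :=
  weak_counterfactuals_noninformative_on_large_spaces_general hd μ ρ hdens F hF f x₀ xC hxC n
end
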